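/- In an additive category, for morphisms p : C → D and d : B → C, the morphism [p 0] : C ⊕ B → D factors as the composite of the isomorphism (1, -d; 0, 1) : C ⊕ B → C ⊕ B, the morphism 1 ⊕ (pd) : C ⊕ B → C ⊕ D, the isomorphism (1, 0; p, 1) : C ⊕ D → C ⊕ D, and the projection C ⊕ D → D; hence if pd is a semi-stable cokernel, [p 0] is a semi-stable cokernel. -/
import Mathlib


open CategoryTheory CategoryTheory.Limits ZeroObject

universe v u

variable {𝒞 : Type u} [Category.{v} 𝒞] [Preadditive 𝒞] [HasZeroObject 𝒞] [HasBinaryBiproducts 𝒞]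

/-- `d` is a cokernel of some morphism. -/
def IsCokernelOfSome {B X : 𝒞} (d : B ⟶ X) : Prop :=
  ∃ (A : 𝒞) (f : A ⟶ B) (w : f ≫ d = 0), Nonempty (IsColimit (CokernelCofork.ofπ d w))

/-- `i` is a kernel of some morphism. -/
def IsKernelOfSome {A B : 𝒞} (i : A ⟶ B) : Prop :=
  ∃ (X : 𝒞) (f : B ⟶ X) (w : i ≫ f = 0), Nonempty (IsLimit (KernelFork.ofι i w))

/-- A semi-stable cokernel: a cokernel whose pullback along every morphism exists
and is again a cokernel. -/
def IsSemiStableCokernel {B X : 𝒞} (d : B ⟶ X) : Prop :=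
  IsCokernelOfSome d ∧ ∀ (C' : 𝒞) (h : C' ⟶ X), ∃ (B' : 𝒞) (g : B' ⟶ B) (d' : B' ⟶ C'),
    IsPullback g d' d h ∧ IsCokernelOfSome d'

/-- A semi-stable kernel: a kernel whose pushout along every morphism exists
and is again a kernel. -/
def IsSemiStableKernel {A B : 𝒞} (i : A ⟶ B) : Prop :=
  IsKernelOfSome i ∧ ∀ (A' : 𝒞) (h : A ⟶ A'), ∃ (P : 𝒞) (g : B ⟶ P) (i' : A' ⟶ P),
    IsPushout i h g i' ∧ IsKernelOfSome i'

/-! ### Auxiliary lemmas -/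

lemma IsCokernelOfSome.epi {B X : 𝒞} {d : B ⟶ X} (hd : IsCokernelOfSome d) : Epi d := by
  obtain ⟨A, f, w, ⟨hc⟩⟩ := hd
  simpa using epi_of_isColimit_cofork hc

lemma IsCokernelOfSome.of_isIso {B X : 𝒞} (e : B ⟶ X) [IsIso e] : IsCokernelOfSome e := by
  refine ⟨0, 0, by simp, ⟨?_⟩⟩
  exact CokernelCofork.IsColimit.ofπ _ _ (fun g' _ => inv e ≫ g')
    (fun g' _ => by simp) (fun g' _ m hm => by simp [← hm])

lemma IsSemiStableCokernel.of_isIso {B X : 𝒞} (e : B ⟶ X) [IsIso e] :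
    IsSemiStableCokernel e := by
  refine ⟨IsCokernelOfSome.of_isIso e, fun C' h => ?_⟩
  refine ⟨C', h ≫ inv e, 𝟙 C', IsPullback.of_vert_isIso ⟨by simp⟩,
    IsCokernelOfSome.of_isIso _⟩

/-- Strengthened pullback property: the pullback of a semi-stable cokernel is
again a semi-stable cokernel. -/
lemma IsSemiStableCokernel.pullback' {B X : 𝒞} {d : B ⟶ X} (hd : IsSemiStableCokernel d)
    {C' : 𝒞} (h : C' ⟶ X) : ∃ (B' : 𝒞) (g : B' ⟶ B) (d' : B' ⟶ C'),
      IsPullback g d' d h ∧ IsSemiStableCokernel d' := by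
  obtain ⟨B', g, d', sq, hcok⟩ := hd.2 C' h
  refine ⟨B', g, d', sq, hcok, ?_⟩
  intro C'' k
  obtain ⟨B'', g₀, d₀, sq₀, hcok₀⟩ := hd.2 C'' (k ≫ h)
  refine ⟨B'', sq.lift g₀ (d₀ ≫ k) (by rw [sq₀.w, Category.assoc]), d₀, ?_, hcok₀⟩
  exact IsPullback.of_right (by rwa [sq.lift_fst]) (sq.lift_snd _ _ _) sq

/-- If `d₁` is a semi-stable cokernel and `d₂` is a cokernel of some morphism, then
`d₁ ≫ d₂` is a cokernel of some morphism. -/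
lemma IsSemiStableCokernel.comp_isCokernelOfSome {B X Y : 𝒞} {d₁ : B ⟶ X} {d₂ : X ⟶ Y}
    (h₁ : IsSemiStableCokernel d₁) (h₂ : IsCokernelOfSome d₂) :
    IsCokernelOfSome (d₁ ≫ d₂) := by
  obtain ⟨A₁, f₁, w₁, ⟨hc₁⟩⟩ := h₁.1
  obtain ⟨A₂, f₂, w₂, ⟨hc₂⟩⟩ := h₂
  obtain ⟨A₂', g, d₁', sq, hcok'⟩ := h₁.2 A₂ f₂
  have epi1 : Epi d₁ := h₁.1.epi
  have epi2 : Epi d₂ := IsCokernelOfSome.epi ⟨A₂, f₂, w₂, ⟨hc₂⟩⟩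
  have epi' : Epi d₁' := hcok'.epi
  have : Epi (d₁ ≫ d₂) := epi_comp _ _
  refine ⟨A₁ ⊞ A₂', biprod.desc f₁ g, ?_, ⟨?_⟩⟩
  · apply biprod.hom_ext'
    · rw [biprod.inl_desc_assoc, reassoc_of% w₁, zero_comp, comp_zero]
    · rw [biprod.inr_desc_assoc, reassoc_of% sq.w, w₂, comp_zero, comp_zero]
  · refine CokernelCofork.IsColimit.ofπ' _ _ (fun {T} k hk => ?_)
    have hf₁ : f₁ ≫ k = 0 := by
      rw [← biprod.inl_desc f₁ g, Category.assoc, hk, comp_zero]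
    have hg : g ≫ k = 0 := by
      rw [← biprod.inr_desc f₁ g, Category.assoc, hk, comp_zero]
    obtain ⟨t, ht⟩ := CokernelCofork.IsColimit.desc' hc₁ k hf₁
    simp only [Cofork.π_ofπ] at ht
    have hf₂ : f₂ ≫ t = 0 := by
      rw [← cancel_epi d₁', ← Category.assoc, ← sq.w, Category.assoc, ht, hg, comp_zero]
    obtain ⟨u, hu⟩ := CokernelCofork.IsColimit.desc' hc₂ t hf₂
    simp only [Cofork.π_ofπ] at hu
    exact ⟨u, by rw [Category.assoc, hu, ht]⟩

/-- Composition of semi-stable cokernels is a semi-stable cokernel. -/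
lemma IsSemiStableCokernel.comp {B X Y : 𝒞} {d₁ : B ⟶ X} {d₂ : X ⟶ Y}
    (h₁ : IsSemiStableCokernel d₁) (h₂ : IsSemiStableCokernel d₂) :
    IsSemiStableCokernel (d₁ ≫ d₂) := by
  refine ⟨h₁.comp_isCokernelOfSome h₂.1, fun C' h => ?_⟩
  obtain ⟨X'', g₂, d₂', sq₂, hd₂'⟩ := h₂.pullback' h
  obtain ⟨B'', g₁, d₁', sq₁, hd₁'⟩ := h₁.pullback' g₂
  exact ⟨B'', g₁, d₁' ≫ d₂', sq₁.paste_vert sq₂, hd₁'.comp_isCokernelOfSome hd₂'.1⟩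

/-- The projection `X ⊞ D ⟶ D` is a semi-stable cokernel. -/
lemma isSemiStableCokernel_biprod_snd (X D : 𝒞) :
    IsSemiStableCokernel (biprod.snd : X ⊞ D ⟶ D) := by
  constructor
  · refine ⟨X, biprod.inl, biprod.inl_snd, ⟨?_⟩⟩
    refine CokernelCofork.IsColimit.ofπ _ _ (fun g' _ => biprod.inr ≫ g')
      (fun g' w => ?_) (fun g' w m hm => by simp [← hm])
    apply biprod.hom_ext'
    · simpa using w.symm
    · simp
  · intro C' h
    have comm : biprod.map (𝟙 X) h ≫ (biprod.snd : X ⊞ D ⟶ D) =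
        (biprod.snd : X ⊞ C' ⟶ C') ≫ h := by simp
    have lim : IsLimit (PullbackCone.mk (biprod.map (𝟙 X) h) (biprod.snd : X ⊞ C' ⟶ C') comm) := by
      refine PullbackCone.IsLimit.mk comm
        (fun s => biprod.lift (s.fst ≫ biprod.fst) s.snd) (fun s => ?_) (fun s => by simp)
        (fun s m hm₁ hm₂ => ?_)
      · apply biprod.hom_ext
        · simp
        · simpa using s.condition.symm
      · apply biprod.hom_ext
        · have := hm₁ =≫ biprod.fst
          simpa using this
        · simpa using hm₂
    refine ⟨X ⊞ C', biprod.map (𝟙 X) h, biprod.snd,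
      IsPullback.of_isLimit lim, X, biprod.inl, biprod.inl_snd, ⟨?_⟩⟩
    refine CokernelCofork.IsColimit.ofπ _ _ (fun g' _ => biprod.inr ≫ g')
      (fun g' w => ?_) (fun g' w m hm => by simp [← hm])
    apply biprod.hom_ext'
    · simpa using w.symm
    · simp

/-- `𝟙 Y ⊕ d` is a semi-stable cokernel if `d` is. -/
lemma IsSemiStableCokernel.biprod_map_id {Y B X : 𝒞} {d : B ⟶ X}
    (hd : IsSemiStableCokernel d) :
    IsSemiStableCokernel (biprod.map (𝟙 Y) d) := by
  have epid : Epi d := hd.1.epi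
  constructor
  · obtain ⟨A, f, w, ⟨hc⟩⟩ := hd.1
    refine ⟨A, f ≫ biprod.inr, by rw [Category.assoc, biprod.inr_map, reassoc_of% w,
      zero_comp], ⟨?_⟩⟩
    refine CokernelCofork.IsColimit.ofπ _ _ (fun {T} s hs => ?_) (fun {T} s hs => ?_)
      (fun {T} s hs m hm => ?_)
    · -- desc
      exact biprod.desc (biprod.inl ≫ s)
        (CokernelCofork.IsColimit.desc' hc (biprod.inr ≫ s)
          (by rw [← Category.assoc]; exact hs)).1
    · apply biprod.hom_ext'
      · simp
      · have := (CokernelCofork.IsColimit.desc' hc (biprod.inr ≫ s)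
          (by rw [← Category.assoc]; exact hs)).2
        simp only [Cofork.π_ofπ] at this
        simpa using this
    · apply biprod.hom_ext'
      · simpa using biprod.inl ≫= hm
      · have h2 := (CokernelCofork.IsColimit.desc' hc (biprod.inr ≫ s)
          (by rw [← Category.assoc]; exact hs)).2
        simp only [Cofork.π_ofπ] at h2
        rw [← cancel_epi d]
        have := biprod.inr ≫= hm
        simp only [biprod.inr_map_assoc] at this
        simpa [h2] using this
  · intro C' h
    obtain ⟨B', g, d', sq, hcok⟩ := hd.2 C' (h ≫ biprod.snd)
    have comm : biprod.lift (d' ≫ h ≫ biprod.fst) g ≫ biprod.map (𝟙 Y) d = d' ≫ h := by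
      apply biprod.hom_ext
      · simp
      · simp [sq.w]
    have lim : IsLimit (PullbackCone.mk (biprod.lift (d' ≫ h ≫ biprod.fst) g) d' comm) := by
      refine PullbackCone.IsLimit.mk comm (fun s => sq.lift
        (s.fst ≫ biprod.snd) s.snd ?_) (fun s => ?_)
        (fun s => sq.lift_snd _ _ _) (fun s m hm₁ hm₂ => ?_)
      · have := s.condition =≫ biprod.snd
        simpa using this
      · apply biprod.hom_ext
        · have := s.condition =≫ biprod.fst
          simp only [Category.assoc, biprod.map_fst, Category.comp_id] at this
          simp [this]
        · simp [sq.lift_fst]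
      · apply sq.hom_ext
        · have := hm₁ =≫ biprod.snd
          simp only [Category.assoc, biprod.lift_snd] at this
          rw [this, sq.lift_fst]
        · rw [hm₂, sq.lift_snd]
    exact ⟨B', biprod.lift (d' ≫ h ≫ biprod.fst) g, d', IsPullback.of_isLimit lim, hcok⟩

theorem stmt15 {B X D : 𝒞} (p : X ⟶ D) (d : B ⟶ X) :
    (biprod.desc p 0 : X ⊞ B ⟶ D) =
      (biprod.desc biprod.inl (biprod.lift (-d) (𝟙 B)) : X ⊞ B ⟶ X ⊞ B) ≫
        biprod.map (𝟙 X) (d ≫ p) ≫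
        (biprod.desc (biprod.lift (𝟙 X) p) biprod.inr : X ⊞ D ⟶ X ⊞ D) ≫
        biprod.snd ∧
    IsIso (biprod.desc biprod.inl (biprod.lift (-d) (𝟙 B)) : X ⊞ B ⟶ X ⊞ B) ∧
    IsIso (biprod.desc (biprod.lift (𝟙 X) p) biprod.inr : X ⊞ D ⟶ X ⊞ D) ∧
    (IsSemiStableCokernel (d ≫ p) →
      IsSemiStableCokernel (biprod.desc p 0 : X ⊞ B ⟶ D)) := by
  have hiso₁ : IsIso (biprod.desc biprod.inl (biprod.lift (-d) (𝟙 B)) : X ⊞ B ⟶ X ⊞ B) := by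
    refine ⟨biprod.desc biprod.inl (biprod.lift d (𝟙 B)), ?_, ?_⟩ <;>
      · apply biprod.hom_ext' <;> apply biprod.hom_ext <;> simp
  have hiso₂ : IsIso (biprod.desc (biprod.lift (𝟙 X) p) biprod.inr : X ⊞ D ⟶ X ⊞ D) := by
    refine ⟨biprod.desc (biprod.lift (𝟙 X) (-p)) biprod.inr, ?_, ?_⟩ <;>
      · apply biprod.hom_ext' <;> apply biprod.hom_ext <;> simp
  have heq : (biprod.desc p 0 : X ⊞ B ⟶ D) =
      (biprod.desc biprod.inl (biprod.lift (-d) (𝟙 B)) : X ⊞ B ⟶ X ⊞ B) ≫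
        biprod.map (𝟙 X) (d ≫ p) ≫
        (biprod.desc (biprod.lift (𝟙 X) p) biprod.inr : X ⊞ D ⟶ X ⊞ D) ≫
        biprod.snd := by
    have e1 : biprod.map (𝟙 X) (d ≫ p) ≫
        (biprod.desc (biprod.lift (𝟙 X) p) biprod.inr : X ⊞ D ⟶ X ⊞ D) ≫ biprod.snd =
        biprod.desc p (d ≫ p) := by
      apply biprod.hom_ext' <;> simp
    rw [e1]
    apply biprod.hom_ext'
    · simp
    · simp [biprod.lift_desc]
  refine ⟨heq, hiso₁, hiso₂, fun hdp => ?_⟩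
  rw [heq]
  exact (IsSemiStableCokernel.of_isIso _).comp (hdp.biprod_map_id.comp
    ((IsSemiStableCokernel.of_isIso _).comp (isSemiStableCokernel_biprod_snd X D)))
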